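/- arXiv:1403.5368 — 4 statements merged into one kernel-verified Lean document; each statement's English description precedes it below -/
import Mathlib

section
/- Let $1 \le p \le q < \infty$ and $K \in [0,\infty)$. There exists a constant $C > 0$ such that for all $t > 0$, all Borel sets $E, F \subseteq \mathbb{R}$ and all $f \in L^p(\mathbb{R},\mathbb{C})$: $\|\chi_F \cdot (k_t * (\chi_E f))\|_{L^q} \le C\, t^{1/q - 1/p} \left(1 + \frac{d(E,F)}{t}\right)^{-K} \|\chi_E f\|_{L^p}$. -/
/-!
For `x ∈ F` and `y ∈ E` we have `|x - y| ≥ d := d(E,F)`, and half of the exponential decay of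
`k_t(x - y)` already gives `k_t(x - y) ≤ 2 e^{-d/(2t)} k_{2t}(x - y)`. Young's convolution
inequality with `1/p + 1/r = 1 + 1/q` then bounds the `L^q` norm by
`2 e^{-d/(2t)} ‖k_{2t}‖_r ‖χ_E f‖_p`, and `‖k_{2t}‖_r ≤ t^{1/q - 1/p}` by direct computation.
Finally `e^{-s/2} ≤ (1 + 2K)^K (1 + s)^{-K}` trades the exponential decay in `s = d/t` for
polynomial decay of any order. Young's inequality is proved for `ℝ≥0∞`-valued functions by
Hölder's inequality with three factors.
-/

open MeasureTheory ENNReal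

/-- The one-dimensional resolvent kernel `k_t(x) = (1/(2t)) e^{-|x|/t}`. -/
noncomputable def resKernel (t x : ℝ) : ℝ := (1 / (2 * t)) * Real.exp (-|x| / t)

/-- The distance `d(E,F) = inf {dist x y | x ∈ E, y ∈ F}` between two sets. -/
noncomputable def setDist {α : Type*} [PseudoMetricSpace α] (E F : Set α) : ℝ :=
  sInf (Set.image2 dist E F)

theorem ENNReal.mul_rpow_sub_one (a : ℝ≥0∞) {s : ℝ} (hs : 1 ≤ s) : a * a ^ (s - 1) = a ^ s := by
  nth_rewrite 1 [← rpow_one a]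
  rw [← rpow_add_of_nonneg _ _ zero_le_one (by linarith), add_sub_cancel]

section Young

variable {G : Type*} [MeasurableSpace G] [AddCommGroup G] [MeasurableAdd₂ G] [MeasurableNeg G]
  {μ : Measure G} [SFinite μ] [μ.IsAddLeftInvariant] {f g : G → ℝ≥0∞} {p q r : ℝ}

theorem lintegral_lconvolution (hf : AEMeasurable f μ) (hg : AEMeasurable g μ) :
    ∫⁻ x, (f ⋆ₗ[μ] g) x ∂μ = (∫⁻ x, f x ∂μ) * ∫⁻ x, g x ∂μ := by
  simp only [lconvolution_def]
  rw [lintegral_lintegral_swap (by fun_prop)]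
  have (y : G) : ∫⁻ x, f y * g (-y + x) ∂μ = f y * ∫⁻ x, g x ∂μ := by
    rw [lintegral_const_mul'' _ (by fun_prop), ← lintegral_add_left_eq_self g (-y)]
  simp_rw [this]
  exact lintegral_mul_const'' _ hf

theorem pos_of_young_exponents (hp : 1 ≤ p) (hpq : p ≤ q) (hr : 1 / p + 1 / r = 1 + 1 / q) :
    0 < r := by
  have : 0 < 1 / q := by have := zero_lt_one.trans_le (hp.trans hpq); positivity
  have : 1 / p ≤ 1 := div_le_one_of_le₀ hp (by linarith)
  exact one_div_pos.mp (by linarith)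

theorem lconvolution_apply_le_holder [μ.IsNegInvariant] (hp : 1 ≤ p) (hpq : p ≤ q)
    (hr : 1 / p + 1 / r = 1 + 1 / q) (hf : AEMeasurable f μ) (hg : AEMeasurable g μ) (x : G) :
    (f ⋆ₗ[μ] g) x ≤ ((fun y ↦ f y ^ p) ⋆ₗ[μ] fun y ↦ g y ^ r) x ^ (1 / q) *
      (∫⁻ y, f y ^ p ∂μ) ^ (1 / p - 1 / q) * (∫⁻ y, g y ^ r ∂μ) ^ (1 - 1 / p) := by
  have hq : 0 < q := by linarith
  have hr0 := pos_of_young_exponents hp hpq hr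
  have h1p : 1 / p ≤ 1 := div_le_one_of_le₀ hp (by linarith)
  have h1q : 1 / q ≤ 1 / p := one_div_le_one_div_of_le (by linarith) hpq
  have hfexp : p * (1 / q) + p * (1 / p - 1 / q) = 1 := by field_simp; ring
  have hgexp : r * (1 / q) + r * (1 - 1 / p) = 1 := by
    rw [← mul_add, show 1 / q + (1 - 1 / p) = 1 / r by linarith, mul_one_div_cancel hr0.ne']
  have hsplit (a b : ℝ≥0∞) : a * b = (a ^ p * b ^ r) ^ (1 / q) * (a ^ p) ^ (1 / p - 1 / q) *
      (b ^ r) ^ (1 - 1 / p) := by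
    rw [mul_rpow_of_nonneg _ _ (by positivity), ← rpow_mul, ← rpow_mul, ← rpow_mul, ← rpow_mul,
      show ∀ a b c d : ℝ≥0∞, a * b * c * d = (a * c) * (b * d) by intros; ring,
      ← rpow_add_of_nonneg _ _ (by positivity) (mul_nonneg (by linarith) (by linarith)),
      ← rpow_add_of_nonneg _ _ (by positivity) (mul_nonneg hr0.le (by linarith)),
      hfexp, hgexp, rpow_one, rpow_one]
  have hgx : AEMeasurable (fun y ↦ g (x - y)) μ :=
    hg.comp_quasiMeasurePreserving (quasiMeasurePreserving_sub_left μ x)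
  have hholder := lintegral_prod_norm_pow_le (μ := μ) Finset.univ
    (f := ![fun y ↦ f y ^ p * g (x - y) ^ r, fun y ↦ f y ^ p, fun y ↦ g (x - y) ^ r])
    (p := ![1 / q, 1 / p - 1 / q, 1 - 1 / p])
    (fun i _ ↦ by
      fin_cases i <;> simp only [Fin.zero_eta, Fin.mk_one, Fin.reduceFinMk, Matrix.cons_val]
      exacts [(hf.pow_const _).mul (hgx.pow_const _), hf.pow_const _, hgx.pow_const _])
    (by simp only [Fin.sum_univ_three, Matrix.cons_val]; ring)
    (fun i _ ↦ by
      fin_cases i <;> simp only [Fin.zero_eta, Fin.mk_one, Fin.reduceFinMk, Matrix.cons_val] <;>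
        linarith [one_div_pos.mpr hq])
  simp only [Fin.prod_univ_three, Matrix.cons_val] at hholder
  rw [← lintegral_sub_left_eq_self (fun y ↦ g y ^ r) x]
  simp_rw [lconvolution_def, neg_add_eq_sub]
  calc ∫⁻ y, f y * g (x - y) ∂μ
      = ∫⁻ y, (f y ^ p * g (x - y) ^ r) ^ (1 / q) * (f y ^ p) ^ (1 / p - 1 / q) *
          (g (x - y) ^ r) ^ (1 - 1 / p) ∂μ := lintegral_congr fun y ↦ hsplit _ _
    _ ≤ _ := hholder

theorem eLpNorm'_lconvolution_le [μ.IsNegInvariant] (hp : 1 ≤ p) (hpq : p ≤ q)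
    (hr : 1 / p + 1 / r = 1 + 1 / q) (hf : AEMeasurable f μ) (hg : AEMeasurable g μ) :
    eLpNorm' (f ⋆ₗ[μ] g) q μ ≤ eLpNorm' f p μ * eLpNorm' g r μ := by
  have hq : 0 < q := by linarith
  have hr0 := pos_of_young_exponents hp hpq hr
  have hqp : 1 ≤ q / p := by rw [le_div_iff₀ (by linarith)]; linarith
  have hqr : q / r - 1 = (1 - 1 / p) * q := by
    rw [div_eq_mul_one_div q r, show 1 / r = 1 + 1 / q - 1 / p by linarith]
    field_simp
    ring
  have hqr1 : 1 ≤ q / r := by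
    have : 1 / p ≤ 1 := div_le_one_of_le₀ hp (by linarith)
    nlinarith
  simp only [eLpNorm', enorm_eq_self]
  set P := ∫⁻ y, f y ^ p ∂μ
  set R := ∫⁻ y, g y ^ r ∂μ
  have hpow (x : G) : (f ⋆ₗ[μ] g) x ^ q ≤
      ((fun y ↦ f y ^ p) ⋆ₗ[μ] fun y ↦ g y ^ r) x * (P ^ (q / p - 1) * R ^ (q / r - 1)) := by
    refine (rpow_le_rpow (lconvolution_apply_le_holder hp hpq hr hf hg x) hq.le).trans_eq ?_
    rw [mul_rpow_of_nonneg _ _ hq.le, mul_rpow_of_nonneg _ _ hq.le, ← rpow_mul, ← rpow_mul,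
      ← rpow_mul, one_div_mul_cancel hq.ne', rpow_one, hqr, mul_assoc]
    congr 3
    field_simp
  have hint : ∫⁻ x, (f ⋆ₗ[μ] g) x ^ q ∂μ ≤ P ^ (q / p) * R ^ (q / r) :=
    calc ∫⁻ x, (f ⋆ₗ[μ] g) x ^ q ∂μ
        ≤ ∫⁻ x, ((fun y ↦ f y ^ p) ⋆ₗ[μ] fun y ↦ g y ^ r) x *
            (P ^ (q / p - 1) * R ^ (q / r - 1)) ∂μ :=
          lintegral_mono hpow
      _ = P * R * (P ^ (q / p - 1) * R ^ (q / r - 1)) := by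
          rw [lintegral_mul_const'' _ (aemeasurable_lconvolution (by fun_prop) (by fun_prop)),
            lintegral_lconvolution (by fun_prop) (by fun_prop)]
      _ = P ^ (q / p) * R ^ (q / r) := by
          rw [mul_mul_mul_comm, mul_rpow_sub_one _ hqp, mul_rpow_sub_one _ hqr1]
  calc (∫⁻ x, (f ⋆ₗ[μ] g) x ^ q ∂μ) ^ (1 / q)
      ≤ (P ^ (q / p) * R ^ (q / r)) ^ (1 / q) := rpow_le_rpow hint (by positivity)
    _ = P ^ (1 / p) * R ^ (1 / r) := by
      rw [mul_rpow_of_nonneg _ _ (by positivity), ← rpow_mul, ← rpow_mul]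
      congr 2 <;> field_simp

end Young

open Real Set

theorem integral_exp_neg_mul_abs {a : ℝ} (ha : 0 < a) : ∫ x, exp (-(a * |x|)) = 2 / a := by
  rw [integral_comp_abs (f := fun x ↦ exp (-(a * x)))]
  simp_rw [← neg_mul]
  rw [integral_exp_mul_Ioi (neg_neg_of_pos ha), mul_zero, exp_zero]
  field_simp

theorem lintegral_ofReal_exp_neg_mul_abs {a : ℝ} (ha : 0 < a) :
    ∫⁻ x, ENNReal.ofReal (exp (-(a * |x|))) = ENNReal.ofReal (2 / a) := by
  have hint : Integrable fun x : ℝ ↦ exp (-(a * |x|)) :=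
    .of_integral_ne_zero (by rw [integral_exp_neg_mul_abs ha]; positivity)
  rw [← integral_exp_neg_mul_abs ha,
    ofReal_integral_eq_lintegral_ofReal hint (ae_of_all _ fun _ ↦ (exp_pos _).le)]

@[fun_prop]
theorem measurable_resKernel (t : ℝ) : Measurable (resKernel t) := by
  unfold resKernel; fun_prop

theorem resKernel_nonneg {t : ℝ} (ht : 0 ≤ t) (x : ℝ) : 0 ≤ resKernel t x := by
  unfold resKernel; positivity

theorem lintegral_ofReal_resKernel_rpow {t r : ℝ} (ht : 0 < t) (hr : 0 < r) :
    ∫⁻ x, ENNReal.ofReal (resKernel t x) ^ r = ENNReal.ofReal ((2 * t) ^ (1 - r) / r) := by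
  have hpow (x : ℝ) : ENNReal.ofReal (resKernel t x) ^ r
      = ENNReal.ofReal ((2 * t) ^ (-r)) * ENNReal.ofReal (exp (-(r / t * |x|))) := by
    rw [ofReal_rpow_of_nonneg (resKernel_nonneg ht.le x) hr.le, ← ofReal_mul (by positivity),
      resKernel, mul_rpow (by positivity) (exp_pos _).le, ← exp_mul, one_div,
      inv_rpow (by positivity), rpow_neg (by positivity)]
    congr 3
    ring
  simp_rw [hpow]
  rw [lintegral_const_mul' _ _ ofReal_ne_top, lintegral_ofReal_exp_neg_mul_abs (by positivity),
    ← ofReal_mul (by positivity), sub_eq_neg_add, rpow_add (by positivity), Real.rpow_one]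
  congr 1
  field_simp

theorem eLpNorm'_ofReal_resKernel_le {t r : ℝ} (ht : 0 < t) (hr : 1 ≤ r) :
    eLpNorm' (fun x ↦ ENNReal.ofReal (resKernel t x)) r volume ≤
      ENNReal.ofReal ((2 * t) ^ (1 / r - 1)) := by
  have hr0 : 0 < r := by linarith
  simp only [eLpNorm', enorm_eq_self]
  rw [lintegral_ofReal_resKernel_rpow ht hr0, ofReal_rpow_of_nonneg (by positivity) (by positivity)]
  apply ofReal_le_ofReal
  rw [div_rpow (by positivity) hr0.le, ← rpow_mul (by positivity),
    show (1 - r) * (1 / r) = 1 / r - 1 by field_simp]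
  exact div_le_self (by positivity) (one_le_rpow hr (by positivity))

theorem resKernel_le_of_le_abs {t d x : ℝ} (ht : 0 < t) (hd : d ≤ |x|) :
    resKernel t x ≤ 2 * exp (-(d / (2 * t))) * resKernel (2 * t) x := by
  rw [resKernel, resKernel, show 2 * exp (-(d / (2 * t))) * (1 / (2 * (2 * t)) *
    exp (-|x| / (2 * t))) = 1 / (2 * t) * (exp (-(d / (2 * t))) * exp (-|x| / (2 * t))) by
      field_simp, ← exp_add]
  gcongr
  rw [div_le_iff₀ ht]
  field_simp
  linarith

theorem exp_neg_half_le_mul_one_add_rpow_neg {K s : ℝ} (hK : 0 ≤ K) (hs : 0 ≤ s) :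
    exp (-(s / 2)) ≤ (1 + 2 * K) ^ K * (1 + s) ^ (-K) := by
  have h12K : 0 < 1 + 2 * K := by linarith
  have hbase : 1 + s ≤ (1 + 2 * K) * exp (s / (1 + 2 * K)) :=
    calc 1 + s ≤ (1 + 2 * K) * (s / (1 + 2 * K) + 1) := by
          rw [mul_add, mul_div_cancel₀ _ h12K.ne']; linarith
      _ ≤ (1 + 2 * K) * exp (s / (1 + 2 * K)) := by gcongr; exact add_one_le_exp _
  have hexp : s / (1 + 2 * K) * K ≤ s / 2 := by
    rw [div_mul_eq_mul_div, div_le_div_iff₀ h12K two_pos]; nlinarith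
  have hpow : (1 + s) ^ K ≤ (1 + 2 * K) ^ K * exp (s / 2) :=
    calc (1 + s) ^ K ≤ ((1 + 2 * K) * exp (s / (1 + 2 * K))) ^ K := by gcongr
      _ ≤ (1 + 2 * K) ^ K * exp (s / 2) := by
          rw [mul_rpow h12K.le (exp_pos _).le, ← exp_mul]
          exact mul_le_mul_of_nonneg_left (exp_le_exp.mpr hexp) (by positivity)
  rw [rpow_neg (by positivity), ← div_eq_mul_inv, le_div_iff₀ (by positivity), exp_neg,
    inv_mul_le_iff₀ (exp_pos _)]
  linarith

theorem setDist_nonneg {α : Type*} [PseudoMetricSpace α] (E F : Set α) : 0 ≤ setDist E F :=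
  Real.sInf_nonneg (Set.forall_mem_image2.mpr fun _ _ _ _ ↦ dist_nonneg)

theorem setDist_le_dist {α : Type*} [PseudoMetricSpace α] {E F : Set α} {x y : α}
    (hx : x ∈ E) (hy : y ∈ F) : setDist E F ≤ dist x y :=
  csInf_le ⟨0, Set.forall_mem_image2.mpr fun _ _ _ _ ↦ dist_nonneg⟩ (Set.mem_image2_of_mem hx hy)

theorem enorm_indicator_integral_resKernel_le {t : ℝ} (ht : 0 < t) (E F : Set ℝ) (f : ℝ → ℂ)
    (x : ℝ) :
    ‖F.indicator (fun x ↦ ∫ y, (resKernel t (x - y) : ℂ) * E.indicator f y) x‖ₑ ≤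
      ENNReal.ofReal (2 * exp (-(setDist E F / (2 * t)))) *
        ((fun y ↦ ‖E.indicator f y‖ₑ) ⋆ₗ fun z ↦ ENNReal.ofReal (resKernel (2 * t) z)) x := by
  by_cases hx : x ∈ F
  swap; · simp [hx]
  rw [indicator_of_mem hx, lconvolution_def, ← lintegral_const_mul' _ _ ofReal_ne_top]
  refine (enorm_integral_le_lintegral_enorm _).trans (lintegral_mono fun y ↦ ?_)
  by_cases hy : y ∈ E
  swap; · simp [hy]
  have hd : setDist E F ≤ |x - y| := by
    rw [abs_sub_comm, ← Real.dist_eq]; exact setDist_le_dist hy hx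
  rw [enorm_mul, ← enorm_norm, Complex.norm_real, enorm_norm,
    Real.enorm_eq_ofReal (resKernel_nonneg ht.le _),
    neg_add_eq_sub, mul_left_comm, ← ofReal_mul (by positivity), mul_comm]
  gcongr
  exact resKernel_le_of_le_abs ht hd

theorem eLpNorm'_indicator_integral_resKernel_le {p q t : ℝ} (hp : 1 ≤ p) (hpq : p ≤ q)
    (ht : 0 < t) {E : Set ℝ} (F : Set ℝ) {f : ℝ → ℂ} (hf : AEMeasurable (E.indicator f)) :
    eLpNorm' (F.indicator fun x ↦ ∫ y, (resKernel t (x - y) : ℂ) * E.indicator f y) q volume ≤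
      ENNReal.ofReal (2 * exp (-(setDist E F / (2 * t))) * t ^ (1 / q - 1 / p)) *
        eLpNorm' (E.indicator f) p volume := by
  set r := (1 + 1 / q - 1 / p)⁻¹ with hr_def
  have hr_inv : 1 / r = 1 + 1 / q - 1 / p := by rw [hr_def, one_div, inv_inv]
  have hr : 1 / p + 1 / r = 1 + 1 / q := by rw [hr_inv]; ring
  have hqp : 1 / q ≤ 1 / p := one_div_le_one_div_of_le (by linarith) hpq
  have hr1 : 1 ≤ r := by
    have : 1 / r ≤ 1 := by linarith
    rwa [div_le_one (pos_of_young_exponents hp hpq hr)] at this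
  have hkernel : eLpNorm' (fun z ↦ ENNReal.ofReal (resKernel (2 * t) z)) r volume ≤
      ENNReal.ofReal (t ^ (1 / q - 1 / p)) := by
    refine (eLpNorm'_ofReal_resKernel_le (by positivity) hr1).trans (ofReal_le_ofReal ?_)
    rw [hr_inv, show 1 + 1 / q - 1 / p - 1 = 1 / q - 1 / p by ring]
    exact rpow_le_rpow_of_nonpos ht (by linarith) (by linarith)
  set G := fun y ↦ ‖E.indicator f y‖ₑ
  have hG : AEMeasurable G := hf.enorm
  rw [← eLpNorm'_enorm (f := E.indicator f)]
  calc _ ≤ ENNReal.ofReal (2 * exp (-(setDist E F / (2 * t)))) *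
        eLpNorm' (G ⋆ₗ fun z ↦ ENNReal.ofReal (resKernel (2 * t) z)) q volume :=
        eLpNorm'_le_mul_eLpNorm'_of_ae_le_mul
          (aemeasurable_lconvolution hG (by fun_prop)).aestronglyMeasurable
          (ae_of_all _ (enorm_indicator_integral_resKernel_le ht E F f)) (by linarith)
    _ ≤ ENNReal.ofReal (2 * exp (-(setDist E F / (2 * t)))) *
        (eLpNorm' G p volume * ENNReal.ofReal (t ^ (1 / q - 1 / p))) := by
        gcongr
        exact (eLpNorm'_lconvolution_le hp hpq hr hG (by fun_prop)).trans (by gcongr)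
    _ = _ := by rw [mul_comm (eLpNorm' G _ _), ← mul_assoc, ← ofReal_mul (by positivity)]

/-- For `1 ≤ p ≤ q < ∞` and `K ∈ [0,∞)` there is `C > 0` such that for all
`t > 0`, all Borel sets `E, F ⊆ ℝ` and all `f ∈ L^p(ℝ,ℂ)`:
`‖χ_F ⬝ (k_t * (χ_E f))‖_{L^q} ≤ C t^{1/q-1/p} (1 + d(E,F)/t)^{-K} ‖χ_E f‖_{L^p}`. -/
theorem stmt1 (p q : ℝ≥0∞) (hp : 1 ≤ p) (hpq : p ≤ q) (hq : q ≠ ⊤) (K : ℝ) (hK : 0 ≤ K) :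
    ∃ C : ℝ, 0 < C ∧ ∀ t : ℝ, 0 < t → ∀ E F : Set ℝ, MeasurableSet E → MeasurableSet F →
      ∀ f : ℝ → ℂ, MemLp f p (volume : Measure ℝ) →
      eLpNorm (F.indicator fun x => ∫ y, (resKernel t (x - y) : ℂ) * E.indicator f y) q volume ≤
        ENNReal.ofReal
            (C * t ^ ((1 / q).toReal - (1 / p).toReal) * (1 + setDist E F / t) ^ (-K)) *
          eLpNorm (E.indicator f) p volume := by
  refine ⟨2 * (1 + 2 * K) ^ K, by positivity, fun t ht E F hE _ f hf ↦ ?_⟩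
  have hpt : p ≠ ⊤ := ne_top_of_le_ne_top hq hpq
  have hexp : (1 / q).toReal - (1 / p).toReal = 1 / q.toReal - 1 / p.toReal := by
    simp only [one_div, toReal_inv]
  rw [eLpNorm_eq_eLpNorm' (zero_lt_one.trans_le (hp.trans hpq)).ne' hq,
    eLpNorm_eq_eLpNorm' (zero_lt_one.trans_le hp).ne' hpt, hexp]
  refine (eLpNorm'_indicator_integral_resKernel_le (by simpa using toReal_mono hpt hp)
    (toReal_mono hq hpq) ht F (hf.1.indicator hE).aemeasurable).trans ?_
  refine mul_le_mul' (ofReal_le_ofReal ?_) le_rfl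
  have hdecay := exp_neg_half_le_mul_one_add_rpow_neg hK (div_nonneg (setDist_nonneg E F) ht.le)
  rw [div_div, mul_comm t] at hdecay
  calc _ = 2 * t ^ (1 / q.toReal - 1 / p.toReal) * exp (-(setDist E F / (2 * t))) := by ring
    _ ≤ 2 * t ^ (1 / q.toReal - 1 / p.toReal) *
        ((1 + 2 * K) ^ K * (1 + setDist E F / t) ^ (-K)) := by gcongr
    _ = _ := by ring
end

section
/- Let $K > 1$. Then for every constant $C > 0$ there exist $t > 0$, Borel sets $E, F \subseteq \mathbb{R}$ and $f \in L^2(\mathbb{R},\mathbb{C})$ such that $\|\chi_F \cdot (p_t * (\chi_E f))\|_{L^2} > C \left(1 + \frac{d(E,F)}{t}\right)^{-K} \|\chi_E f\|_{L^2}$. In other words, the Poisson convolution family $\{f \mapsto p_t * f\}_{t>0}$ does not satisfy $L^2$-$L^2$ off-diagonal estimates of any order $K > 1$. -/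
/-!
Take `t = 1`, `E = [-d, 0]`, `F = [d, 2d]` and `f = χ_E`, so that `d(E, F) = d`. For `x ∈ F` and
`y ∈ E` we have `|x - y| ≤ 3d`, hence `p_1(x - y) ≳ d⁻²` and `p_1 * χ_E ≳ d⁻¹` on `F`. Thus
`‖χ_F (p_1 * χ_E)‖₂ ≳ d⁻¹ ‖χ_E‖₂`, while an estimate of order `K` would bound it by
`C (1 + d)^(-K) ‖χ_E‖₂`, which is smaller for large `d` because `K > 1`.
-/

open MeasureTheory ENNReal

/-- The Poisson kernel `p_t(x) = (1/π) t/(x² + t²)` on `ℝ`. -/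
noncomputable def poissonKernelR (t x : ℝ) : ℝ := (1 / Real.pi) * (t / (x ^ 2 + t ^ 2))

open Set Filter Real

lemma le_setDist {α : Type*} [PseudoMetricSpace α] {E F : Set α} {d : ℝ} (hE : E.Nonempty)
    (hF : F.Nonempty) (h : ∀ x ∈ E, ∀ y ∈ F, d ≤ dist x y) : d ≤ setDist E F :=
  le_csInf (hE.image2 hF) (by rintro _ ⟨x, hx, y, hy, rfl⟩; exact h x hx y hy)

lemma continuous_poissonKernelR {t : ℝ} (ht : t ≠ 0) : Continuous (poissonKernelR t) :=
  continuous_const.mul <| continuous_const.div (by fun_prop) fun x => by positivity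

lemma div_pi_mul_le_poissonKernelR {t x R : ℝ} (ht : 0 < t) (hx : |x| ≤ R) :
    t / (π * (R ^ 2 + t ^ 2)) ≤ poissonKernelR t x := by
  have hxR : x ^ 2 ≤ R ^ 2 := sq_abs x ▸ pow_le_pow_left₀ (abs_nonneg x) hx 2
  rw [poissonKernelR, one_div_mul_eq_div, div_div, ← mul_comm π]
  gcongr

lemma integral_poissonKernelR_mul_indicator_one {E : Set ℝ} (hE : MeasurableSet E) (t x : ℝ) :
    ∫ y, (poissonKernelR t (x - y) : ℂ) * E.indicator 1 y =
      ((∫ y in E, poissonKernelR t (x - y) : ℝ) : ℂ) := by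
  have : (fun y => (poissonKernelR t (x - y) : ℂ) * E.indicator 1 y) =
      E.indicator fun y => (poissonKernelR t (x - y) : ℂ) := by
    ext y; by_cases hy : y ∈ E <;> simp [hy]
  rw [this, integral_indicator hE]
  exact integral_ofReal

lemma div_le_setIntegral_poissonKernelR_Icc {t d x : ℝ} (ht : 0 < t) (htd : t ≤ d)
    (hx : x ∈ Icc d (2 * d)) :
    t / (10 * π) / d ≤ ∫ y in Icc (-d) 0, poissonKernelR t (x - y) := by
  have hd : 0 < d := ht.trans_le htd
  have hkernel : ∀ y ∈ Icc (-d) 0, t / (π * ((3 * d) ^ 2 + t ^ 2)) ≤ poissonKernelR t (x - y) :=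
    fun y hy => div_pi_mul_le_poissonKernelR ht <| abs_le.2
      ⟨by linarith [hx.1, hy.2], by linarith [hx.2, hy.1]⟩
  have hvol : volume.real (Icc (-d) 0) = d := by simp [measureReal_def, hd.le]
  calc t / (10 * π) / d ≤ t / (π * ((3 * d) ^ 2 + t ^ 2)) * d := by
        rw [div_div, div_mul_eq_mul_div, div_le_div_iff₀ (by positivity) (by positivity)]
        have : t ^ 2 ≤ d ^ 2 := pow_le_pow_left₀ ht.le htd 2
        nlinarith [mul_le_mul_of_nonneg_left this (by positivity : 0 ≤ t * π)]
    _ ≤ ∫ y in Icc (-d) 0, poissonKernelR t (x - y) := by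
        have := setIntegral_ge_of_const_le_real (μ := volume) measurableSet_Icc
          measure_Icc_lt_top.ne hkernel
          ((continuous_poissonKernelR ht.ne').comp (continuous_sub_left x)).integrableOn_Icc
        rwa [hvol] at this

lemma ofReal_mul_measure_rpow_le_eLpNorm_indicator {α G : Type*} [MeasurableSpace α]
    [NormedAddCommGroup G] {μ : Measure α} {p : ℝ≥0∞} {s : Set α} {g : α → G} {c : ℝ}
    (hs : MeasurableSet s) (hp : p ≠ 0) (hp_top : p ≠ ∞) (hg : ∀ x ∈ s, c ≤ ‖g x‖) :
    ENNReal.ofReal c * μ s ^ (1 / p.toReal) ≤ eLpNorm (s.indicator g) p μ := by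
  rcases lt_or_ge c 0 with hc | hc
  · simp [ofReal_of_nonpos hc.le]
  rw [← Real.enorm_of_nonneg hc, ← eLpNorm_indicator_const hs hp hp_top]
  refine eLpNorm_mono fun x => ?_
  by_cases hx : x ∈ s
  · simpa [hx, abs_of_nonneg hc] using hg x hx
  · simp [hx]

lemma eventually_mul_one_add_rpow_neg_lt_div {K A B : ℝ} (hK : 1 < K) (hA : 0 ≤ A) (hB : 0 < B) :
    ∀ᶠ d in atTop, A * (1 + d) ^ (-K) < B / d := by
  filter_upwards [(tendsto_rpow_atTop (sub_pos.2 hK)).eventually_gt_atTop (A / B),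
    eventually_gt_atTop 0] with d hdA hd
  calc A * (1 + d) ^ (-K) ≤ A * d ^ (-K) :=
        mul_le_mul_of_nonneg_left (rpow_le_rpow_of_nonpos hd (by linarith) (by linarith)) hA
    _ < B * d ^ (K - 1) * d ^ (-K) :=
        mul_lt_mul_of_pos_right ((div_lt_iff₀' hB).1 hdA) (rpow_pos_of_pos hd _)
    _ = B / d := by rw [mul_assoc, ← rpow_add hd, show K - 1 + -K = -1 by ring, Real.rpow_neg_one,
      div_eq_mul_inv]

/-- For `K > 1` and every `C > 0` there are `t > 0`, Borel sets `E, F ⊆ ℝ`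
and `f ∈ L²(ℝ,ℂ)` with
`‖χ_F ⬝ (p_t * (χ_E f))‖_{L²} > C (1 + d(E,F)/t)^{-K} ‖χ_E f‖_{L²}`:
the Poisson family satisfies no `L²-L²` off-diagonal estimates of order `K > 1`. -/
theorem stmt3 (K : ℝ) (hK : 1 < K) :
    ∀ C : ℝ, 0 < C → ∃ (t : ℝ) (E F : Set ℝ) (f : ℝ → ℂ), 0 < t ∧
      MeasurableSet E ∧ MeasurableSet F ∧ MemLp f 2 (volume : Measure ℝ) ∧
      ENNReal.ofReal (C * (1 + setDist E F / t) ^ (-K)) * eLpNorm (E.indicator f) 2 volume <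
        eLpNorm (F.indicator fun x => ∫ y, (poissonKernelR t (x - y) : ℂ) * E.indicator f y)
          2 volume := by
  intro C hC
  obtain ⟨d, hdC, hd⟩ := ((eventually_mul_one_add_rpow_neg_lt_div hK hC.le
    (by positivity : 0 < 1 / (10 * π))).and (eventually_ge_atTop 1)).exists
  have hd0 : 0 < d := one_pos.trans_le hd
  set E := Icc (-d) 0
  set F := Icc d (2 * d)
  have hvolE : volume E = ENNReal.ofReal d := by simp [E]
  have hvolF : volume F = ENNReal.ofReal d := by simp [F]; ring_nf
  have hdist : d ≤ setDist E F := le_setDist ⟨0, by simp [E, hd0.le]⟩ ⟨d, by simp [F]; linarith⟩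
    fun x hx y hy => by rw [Real.dist_eq, abs_sub_comm, abs_of_nonneg] <;> linarith [hx.2, hy.1]
  refine ⟨1, E, F, E.indicator 1, one_pos, measurableSet_Icc, measurableSet_Icc,
    memLp_indicator_const 2 measurableSet_Icc 1 (Or.inr measure_Icc_lt_top.ne), ?_⟩
  rw [indicator_indicator, inter_self, div_one]
  calc ENNReal.ofReal (C * (1 + setDist E F) ^ (-K)) * eLpNorm (E.indicator 1) 2 volume
      ≤ ENNReal.ofReal (C * (1 + d) ^ (-K)) * volume F ^ (1 / (2 : ℝ≥0∞).toReal) := by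
        rw [Pi.one_def, eLpNorm_indicator_const measurableSet_Icc two_ne_zero ofNat_ne_top, hvolE,
          ← hvolF, enorm_one, one_mul]
        exact mul_le_mul_left (ofReal_le_ofReal <| mul_le_mul_of_nonneg_left
          (rpow_le_rpow_of_nonpos (by positivity) (by linarith) (by linarith)) hC.le) _
    _ < ENNReal.ofReal (1 / (10 * π) / d) * volume F ^ (1 / (2 : ℝ≥0∞).toReal) := by
        refine ENNReal.mul_lt_mul_left ?_ ?_ ((ofReal_lt_ofReal_iff (by positivity)).2 hdC)
        · simp [hvolF, hd0]
        · simp [hvolF]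
    _ ≤ _ := ofReal_mul_measure_rpow_le_eLpNorm_indicator measurableSet_Icc two_ne_zero
        ofNat_ne_top fun x hx => by
          rw [integral_poissonKernelR_mul_indicator_one measurableSet_Icc, Complex.norm_real]
          exact (div_le_setIntegral_poissonKernelR_Icc one_pos hd hx).trans (le_abs_self _)
end

section
/- For every $\nu \in (0, \pi/2)$ there exists a constant $C_\nu > 0$ such that for every $z \in S_\nu^o$ one has $1 + iz \ne 0$ and $\left| e^{-\tilde{z}} - \frac{1}{1+iz} \right| \le C_\nu \frac{|z|}{1 + |z|^2}$. -/
open MeasureTheory ENNReal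

/-- The open bisector `S_ν^o = {z ≠ 0 : |arg z| < ν or |arg (-z)| < ν}`. -/
def openBisector (ν : ℝ) : Set ℂ := {z | z ≠ 0 ∧ (|Complex.arg z| < ν ∨ |Complex.arg (-z)| < ν)}

/-- For `z` with `Re z ≠ 0`, `z̃ := z` if `Re z > 0` and `z̃ := -z` otherwise. -/
noncomputable def bisecTilde (z : ℂ) : ℂ := if 0 < z.re then z else -z

/-!
On the bisector, `Re z̃ ≥ cos ν ‖z‖` and `Im z ≤ sin ν ‖z‖`, hence
`‖1 + iz‖² ≥ (1 - sin ν)(1 + ‖z‖²)`. Writing `ψ(z) = (e^{-z̃} - 1) + iz/(1 + iz)` gives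
`‖ψ(z)‖ ≤ A ‖z‖`, while bounding the two terms of `ψ` separately gives `‖ψ(z)‖ ‖z‖ ≤ B`;
adding, `‖ψ(z)‖ (1 + ‖z‖²) ≤ (A + B) ‖z‖`.
-/

open Complex Real

lemma le_mul_div_one_add_sq {a r A B : ℝ} (hr : 0 ≤ r) (hsmall : a ≤ A * r)
    (hlarge : a * r ≤ B) : a ≤ (A + B) * r / (1 + r ^ 2) := by
  rw [le_div_iff₀ (by positivity)]
  nlinarith [mul_le_mul_of_nonneg_right hlarge hr]

namespace Complex

lemma cos_mul_norm_le_re_of_abs_arg_le {ν : ℝ} (hν : ν ≤ π) {u : ℂ} (h : |arg u| ≤ ν) :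
    Real.cos ν * ‖u‖ ≤ u.re := by
  rw [← norm_mul_cos_arg, mul_comm, ← Real.cos_abs (arg u)]
  gcongr
  exact Real.cos_le_cos_of_nonneg_of_le_pi (abs_nonneg _) hν h

lemma abs_im_le_sin_mul_norm_of_abs_arg_le {ν : ℝ} (hν : ν ≤ π / 2) {u : ℂ}
    (h : |arg u| ≤ ν) : |u.im| ≤ Real.sin ν * ‖u‖ := by
  rw [← norm_mul_sin_arg, abs_mul, abs_norm, mul_comm,
    Real.abs_sin_eq_sin_abs_of_abs_le_pi (abs_arg_le_pi u)]
  gcongr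
  exact Real.sin_le_sin_of_le_of_le_pi_div_two (by linarith [abs_nonneg (arg u)]) hν h

lemma norm_exp_neg_mul_norm_le {c : ℝ} (hc : 0 < c) {x : ℂ} (hx : c * ‖x‖ ≤ x.re) :
    ‖exp (-x)‖ * ‖x‖ ≤ c⁻¹ := by
  rw [norm_exp, neg_re, Real.exp_neg, inv_mul_le_iff₀ (Real.exp_pos _), le_mul_inv_iff₀ hc]
  linarith [Real.add_one_le_exp x.re]

lemma norm_exp_neg_sub_one_le {x : ℂ} (hx : 0 ≤ x.re) : ‖exp (-x) - 1‖ ≤ 2 * ‖x‖ := by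
  rcases le_or_gt ‖x‖ 1 with hx1 | hx1
  · simpa using norm_exp_sub_one_le (x := -x) (by simpa using hx1)
  · have : ‖exp (-x)‖ ≤ 1 := by
      rw [norm_exp, neg_re, Real.exp_le_one_iff]
      linarith
    calc ‖exp (-x) - 1‖ ≤ ‖exp (-x)‖ + ‖(1 : ℂ)‖ := norm_sub_le _ _
      _ ≤ 2 * ‖x‖ := by rw [norm_one]; linarith

lemma one_sub_mul_one_add_sq_le_norm_one_add_I_mul_sq {s : ℝ} (hs : 0 ≤ s) {z : ℂ}
    (hz : z.im ≤ s * ‖z‖) : (1 - s) * (1 + ‖z‖ ^ 2) ≤ ‖1 + I * z‖ ^ 2 := by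
  have hnorm : ‖z‖ ^ 2 = z.re ^ 2 + z.im ^ 2 := by
    rw [Complex.sq_norm, normSq_apply]; ring
  have hnorm' : ‖1 + I * z‖ ^ 2 = 1 - 2 * z.im + ‖z‖ ^ 2 := by
    rw [Complex.sq_norm, normSq_apply, hnorm]
    simp only [add_re, add_im, mul_re, mul_im, I_re, I_im, one_re, one_im]
    ring
  rw [hnorm']
  nlinarith [mul_nonneg hs (sq_nonneg (‖z‖ - 1))]

lemma sqrt_one_sub_le_norm_one_add_I_mul {s : ℝ} (hs0 : 0 ≤ s) (hs1 : s ≤ 1) {z : ℂ}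
    (hz : z.im ≤ s * ‖z‖) : √(1 - s) ≤ ‖1 + I * z‖ ∧ √(1 - s) * ‖z‖ ≤ ‖1 + I * z‖ := by
  have h := one_sub_mul_one_add_sq_le_norm_one_add_I_mul_sq hs0 hz
  have hs : 0 ≤ 1 - s := by linarith
  constructor
  · rw [sqrt_le_left (norm_nonneg _)]
    nlinarith [sq_nonneg ‖z‖]
  · rw [← sqrt_sq (norm_nonneg z), ← sqrt_mul hs, sqrt_le_left (norm_nonneg _)]
    nlinarith

end Complex

lemma norm_bisecTilde (z : ℂ) : ‖bisecTilde z‖ = ‖z‖ := by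
  unfold bisecTilde
  split_ifs <;> simp

lemma cos_mul_norm_le_re_bisecTilde {ν : ℝ} (hν : ν < π / 2) {z : ℂ}
    (hz : z ∈ openBisector ν) : Real.cos ν * ‖z‖ ≤ (bisecTilde z).re := by
  obtain ⟨hz0, h | h⟩ := hz
  · have hre : 0 < z.re :=
      (abs_arg_lt_pi_div_two_iff.1 (h.trans hν)).resolve_right hz0
    rw [bisecTilde, if_pos hre]
    exact cos_mul_norm_le_re_of_abs_arg_le (by linarith [pi_pos]) h.le
  · have hre : 0 < (-z).re :=
      (abs_arg_lt_pi_div_two_iff.1 (h.trans hν)).resolve_right (neg_ne_zero.2 hz0)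
    rw [bisecTilde, if_neg (by rw [neg_re] at hre; linarith), ← norm_neg]
    exact cos_mul_norm_le_re_of_abs_arg_le (by linarith [pi_pos]) h.le

lemma abs_im_le_sin_mul_norm_of_mem_openBisector {ν : ℝ} (hν : ν ≤ π / 2) {z : ℂ}
    (hz : z ∈ openBisector ν) : |z.im| ≤ Real.sin ν * ‖z‖ := by
  rcases hz.2 with h | h
  · exact abs_im_le_sin_mul_norm_of_abs_arg_le hν h.le
  · simpa using abs_im_le_sin_mul_norm_of_abs_arg_le hν h.le

section Estimates

variable {x z : ℂ} {κ : ℝ}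

lemma norm_exp_neg_sub_inv_one_add_I_mul_le (hx : 0 ≤ x.re) (hxz : ‖x‖ = ‖z‖)
    (hκ : 0 < κ) (hw : κ ≤ ‖1 + I * z‖) :
    ‖exp (-x) - (1 + I * z)⁻¹‖ ≤ (2 + κ⁻¹) * ‖z‖ := by
  have hw0 : 1 + I * z ≠ 0 := norm_pos_iff.1 (hκ.trans_le hw)
  have hinv : ‖1 - (1 + I * z)⁻¹‖ ≤ κ⁻¹ * ‖z‖ := by
    rw [show 1 - (1 + I * z)⁻¹ = I * z / (1 + I * z) by field_simp; ring, norm_div,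
      norm_mul, norm_I, one_mul, inv_mul_eq_div]
    exact div_le_div_of_nonneg_left (norm_nonneg z) hκ hw
  calc ‖exp (-x) - (1 + I * z)⁻¹‖ ≤ ‖exp (-x) - 1‖ + ‖1 - (1 + I * z)⁻¹‖ :=
        norm_sub_le_norm_sub_add_norm_sub _ _ _
    _ ≤ 2 * ‖z‖ + κ⁻¹ * ‖z‖ := by
        gcongr
        exact hxz ▸ norm_exp_neg_sub_one_le hx
    _ = (2 + κ⁻¹) * ‖z‖ := by ring

lemma norm_exp_neg_sub_inv_one_add_I_mul_mul_norm_le {c : ℝ} (hc : 0 < c)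
    (hx : c * ‖x‖ ≤ x.re) (hxz : ‖x‖ = ‖z‖) (hκ : 0 < κ) (hw : κ * ‖z‖ ≤ ‖1 + I * z‖) :
    ‖exp (-x) - (1 + I * z)⁻¹‖ * ‖z‖ ≤ c⁻¹ + κ⁻¹ := by
  have hinv : ‖(1 + I * z)⁻¹‖ * ‖z‖ ≤ κ⁻¹ := by
    rcases (norm_nonneg (1 + I * z)).eq_or_lt with h0 | hpos
    · simp [← h0, hκ.le]
    · rw [norm_inv, inv_mul_eq_div, ← one_div, div_le_div_iff₀ hpos hκ]
      linarith
  calc ‖exp (-x) - (1 + I * z)⁻¹‖ * ‖z‖ ≤ (‖exp (-x)‖ + ‖(1 + I * z)⁻¹‖) * ‖z‖ := by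
        gcongr
        exact norm_sub_le _ _
    _ ≤ c⁻¹ + κ⁻¹ := by
        rw [add_mul]
        gcongr
        exact hxz ▸ norm_exp_neg_mul_norm_le hc hx

end Estimates

/-- For every `ν ∈ (0, π/2)` there is `C_ν > 0` such that for every
`z ∈ S_ν^o` one has `1 + iz ≠ 0` and `|e^{-z̃} - (1+iz)⁻¹| ≤ C_ν |z| / (1 + |z|²)`. -/
theorem stmt4 (ν : ℝ) (hν0 : 0 < ν) (hν : ν < Real.pi / 2) :
    ∃ C : ℝ, 0 < C ∧ ∀ z ∈ openBisector ν, 1 + Complex.I * z ≠ 0 ∧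
      ‖Complex.exp (-(bisecTilde z)) - (1 + Complex.I * z)⁻¹‖ ≤ C * ‖z‖ / (1 + ‖z‖ ^ 2) := by
  have hcos : 0 < Real.cos ν := cos_pos_of_mem_Ioo ⟨by linarith, hν⟩
  have hsin0 : 0 ≤ Real.sin ν := sin_nonneg_of_nonneg_of_le_pi hν0.le (by linarith [pi_pos])
  have hsin1 : Real.sin ν < 1 := by
    simpa using sin_lt_sin_of_lt_of_le_pi_div_two (by linarith) le_rfl hν
  set κ := √(1 - Real.sin ν)
  have hκ : 0 < κ := sqrt_pos.2 (by linarith)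
  refine ⟨(2 + κ⁻¹) + ((Real.cos ν)⁻¹ + κ⁻¹), by positivity, fun z hz => ?_⟩
  have hre := cos_mul_norm_le_re_bisecTilde hν hz
  obtain ⟨hw, hwz⟩ := sqrt_one_sub_le_norm_one_add_I_mul hsin0 hsin1.le
    (abs_le.1 (abs_im_le_sin_mul_norm_of_mem_openBisector hν.le hz)).2
  refine ⟨norm_pos_iff.1 (hκ.trans_le hw), le_mul_div_one_add_sq (norm_nonneg z) ?_ ?_⟩
  · exact norm_exp_neg_sub_inv_one_add_I_mul_le (hre.trans' (by positivity))
      (norm_bisecTilde z) hκ hw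
  · exact norm_exp_neg_sub_inv_one_add_I_mul_mul_norm_le hcos
      ((norm_bisecTilde z).symm ▸ hre) (norm_bisecTilde z) hκ hwz
end

section
/- Let $M > 0$, $\tau > 0$ and $K > M$. There exists a constant $C > 0$ such that for all $x \ge 0$ and all $t \ge r > 0$: $\int_0^\infty \min(s^M, 1)\, \min\!\left(1, \left(\frac{t s}{r}\right)^{-\tau}\right) (1 + x s)^{-K}\, \frac{ds}{s} \le C\, (1+x)^{-M}$. -/
/-!
Split `(0, ∞)` at `a = (1 + x)⁻¹` and at `1`. On `(0, a]` the integrand is at most `s ^ (M - 1)`,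
whose integral is `a ^ M / M`. On `(a, 1]` we have `1 + x s ≥ s (1 + x)`, so the integrand is at most
`(1 + x) ^ (-K) s ^ (M - K - 1)`, and `K > M` makes its integral over `(a, ∞)` equal to
`(1 + x) ^ (-M) / (K - M)`. On `(1, ∞)` we have `t s / r ≥ s` and `1 + x s ≥ 1 + x`, so the integrand
is at most `(1 + x) ^ (-K) s ^ (-τ - 1)`, with integral `(1 + x) ^ (-K) / τ`.
-/

open MeasureTheory Set

theorem setIntegral_union_union_le_of_le {α : Type*} [MeasurableSpace α] {μ : Measure α}
    {f g₁ g₂ g₃ : α → ℝ} {s₁ s₂ s₃ : Set α}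
    (hs₁ : MeasurableSet s₁) (hs₂ : MeasurableSet s₂) (hs₃ : MeasurableSet s₃)
    (hf : ∀ x ∈ s₁ ∪ s₂ ∪ s₃, 0 ≤ f x) (hfg₁ : ∀ x ∈ s₁, f x ≤ g₁ x)
    (hfg₂ : ∀ x ∈ s₂, f x ≤ g₂ x) (hfg₃ : ∀ x ∈ s₃, f x ≤ g₃ x)
    (hg₁ : IntegrableOn g₁ s₁ μ) (hg₂ : IntegrableOn g₂ s₂ μ) (hg₃ : IntegrableOn g₃ s₃ μ) :
    ∫ x in s₁ ∪ s₂ ∪ s₃, f x ∂μ ≤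
      ∫ x in s₁, g₁ x ∂μ + ∫ x in s₂, g₂ x ∂μ + ∫ x in s₃, g₃ x ∂μ := by
  set s := s₁ ∪ s₂ ∪ s₃
  have hs : MeasurableSet s := (hs₁.union hs₂).union hs₃
  have piece_nonneg : ∀ {g : α → ℝ} {t : Set α}, t ⊆ s → (∀ y ∈ t, f y ≤ g y) →
      ∀ x, 0 ≤ t.indicator g x := fun hts hfg x =>
    indicator_nonneg (fun y hy => (hf y (hts hy)).trans (hfg y hy)) x
  have piece_ge : ∀ {g : α → ℝ} {t : Set α}, (∀ y ∈ t, f y ≤ g y) →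
      ∀ x ∈ t, f x ≤ t.indicator g x := fun hfg x hx => by
    rw [indicator_of_mem hx]; exact hfg x hx
  have hsub₁ : s₁ ⊆ s := subset_union_left.trans subset_union_left
  have hsub₂ : s₂ ⊆ s := subset_union_right.trans subset_union_left
  have hsub₃ : s₃ ⊆ s := subset_union_right
  have h₁ := piece_nonneg hsub₁ hfg₁
  have h₂ := piece_nonneg hsub₂ hfg₂
  have h₃ := piece_nonneg hsub₃ hfg₃
  have hle : ∀ x ∈ s, f x ≤ s₁.indicator g₁ x + s₂.indicator g₂ x + s₃.indicator g₃ x := by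
    rintro x ((hx | hx) | hx)
    · linarith [piece_ge hfg₁ x hx, h₂ x, h₃ x]
    · linarith [piece_ge hfg₂ x hx, h₁ x, h₃ x]
    · linarith [piece_ge hfg₃ x hx, h₁ x, h₂ x]
  have hi₁ := (hg₁.integrable_indicator hs₁).restrict (s := s)
  have hi₂ := (hg₂.integrable_indicator hs₂).restrict (s := s)
  have hi₃ := (hg₃.integrable_indicator hs₃).restrict (s := s)
  calc ∫ x in s, f x ∂μ
      ≤ ∫ x in s, (s₁.indicator g₁ x + s₂.indicator g₂ x + s₃.indicator g₃ x) ∂μ :=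
        integral_mono_of_nonneg (ae_restrict_of_forall_mem hs hf) ((hi₁.add hi₂).add hi₃)
          (ae_restrict_of_forall_mem hs hle)
    _ = ∫ x in s, s₁.indicator g₁ x ∂μ + ∫ x in s, s₂.indicator g₂ x ∂μ
          + ∫ x in s, s₃.indicator g₃ x ∂μ := by
        rw [integral_add (f := fun x => s₁.indicator g₁ x + s₂.indicator g₂ x) (hi₁.add hi₂) hi₃,
          integral_add hi₁ hi₂]
    _ = _ := by
        rw [setIntegral_indicator hs₁, setIntegral_indicator hs₂, setIntegral_indicator hs₃,
          inter_eq_right.mpr hsub₁, inter_eq_right.mpr hsub₂, inter_eq_right.mpr hsub₃]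

theorem integral_Ioc_zero_rpow_sub_one {p a : ℝ} (hp : 0 < p) (ha : 0 ≤ a) :
    ∫ s in Ioc 0 a, s ^ (p - 1) = a ^ p / p := by
  rw [← intervalIntegral.integral_of_le ha, integral_rpow (Or.inl (by linarith)),
    sub_add_cancel, Real.zero_rpow hp.ne', sub_zero]

theorem integral_Ioi_rpow_neg_sub_one {p c : ℝ} (hp : 0 < p) (hc : 0 < c) :
    ∫ s in Ioi c, s ^ (-p - 1) = c ^ (-p) / p := by
  rw [integral_Ioi_rpow_of_lt (by linarith) hc, sub_add_cancel, neg_div_neg_eq]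

theorem integrableOn_Ioc_zero_rpow_sub_one {p a : ℝ} (hp : 0 < p) (ha : 0 ≤ a) :
    IntegrableOn (fun s : ℝ => s ^ (p - 1)) (Ioc 0 a) :=
  (intervalIntegrable_iff_integrableOn_Ioc_of_le ha).mp
    (intervalIntegral.intervalIntegrable_rpow' (by linarith))

noncomputable def radialIntegrand (M τ K x t r s : ℝ) : ℝ :=
  min (s ^ M) 1 * min 1 ((t * s / r) ^ (-τ)) * (1 + x * s) ^ (-K) / s

section radialIntegrand

variable {M τ K x t r s : ℝ}

theorem radialIntegrand_nonneg (hx : 0 ≤ x) (ht : 0 ≤ t) (hr : 0 ≤ r) (hs : 0 < s) :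
    0 ≤ radialIntegrand M τ K x t r s := by
  unfold radialIntegrand
  positivity

theorem radialIntegrand_le_rpow_sub_one (hK : 0 ≤ K) (hx : 0 ≤ x) (ht : 0 ≤ t) (hr : 0 ≤ r)
    (hs : 0 < s) : radialIntegrand M τ K x t r s ≤ s ^ (M - 1) := by
  have hdecay : (1 + x * s) ^ (-K) ≤ 1 :=
    Real.rpow_le_one_of_one_le_of_nonpos (by nlinarith) (by linarith)
  calc radialIntegrand M τ K x t r s ≤ s ^ M * 1 * 1 / s := by
        unfold radialIntegrand
        gcongr
        · exact min_le_left _ _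
        · exact min_le_left _ _
    _ = s ^ (M - 1) := by rw [Real.rpow_sub_one hs.ne', mul_one, mul_one]

theorem radialIntegrand_le_of_le_one (hK : 0 ≤ K) (hx : 0 ≤ x) (ht : 0 ≤ t) (hr : 0 ≤ r)
    (hs : 0 < s) (hs₁ : s ≤ 1) :
    radialIntegrand M τ K x t r s ≤ (1 + x) ^ (-K) * s ^ (M - K - 1) := by
  have hdecay : (1 + x * s) ^ (-K) ≤ s ^ (-K) * (1 + x) ^ (-K) := by
    rw [← Real.mul_rpow hs.le (by linarith)]
    exact Real.rpow_le_rpow_of_nonpos (by positivity) (by nlinarith) (by linarith)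
  calc radialIntegrand M τ K x t r s ≤ s ^ M * 1 * (s ^ (-K) * (1 + x) ^ (-K)) / s := by
        unfold radialIntegrand
        gcongr
        · exact min_le_left _ _
        · exact min_le_left _ _
    _ = (1 + x) ^ (-K) * s ^ (M - K - 1) := by
        rw [Real.rpow_sub_one hs.ne', sub_eq_add_neg M K, Real.rpow_add hs]
        ring

theorem radialIntegrand_le_of_one_le (hτ : 0 ≤ τ) (hK : 0 ≤ K) (hx : 0 ≤ x) (hr : 0 < r)
    (hrt : r ≤ t) (hs : 1 ≤ s) :
    radialIntegrand M τ K x t r s ≤ (1 + x) ^ (-K) * s ^ (-τ - 1) := by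
  have hs₀ : 0 < s := by linarith
  have ht : 0 ≤ t := hr.le.trans hrt
  have hscale : min 1 ((t * s / r) ^ (-τ)) ≤ s ^ (-τ) := by
    refine (min_le_right _ _).trans (Real.rpow_le_rpow_of_nonpos hs₀ ?_ (by linarith))
    rw [le_div_iff₀ hr]
    nlinarith
  have hdecay : (1 + x * s) ^ (-K) ≤ (1 + x) ^ (-K) :=
    Real.rpow_le_rpow_of_nonpos (by linarith) (by nlinarith) (by linarith)
  calc radialIntegrand M τ K x t r s ≤ 1 * s ^ (-τ) * (1 + x) ^ (-K) / s := by
        unfold radialIntegrand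
        gcongr
        exact min_le_right _ _
    _ = (1 + x) ^ (-K) * s ^ (-τ - 1) := by
        rw [Real.rpow_sub_one hs₀.ne']
        ring

theorem integral_radialIntegrand_le (hM : 0 < M) (hτ : 0 < τ) (hK : M < K) (hx : 0 ≤ x)
    (hr : 0 < r) (hrt : r ≤ t) :
    ∫ s in Ioi 0, radialIntegrand M τ K x t r s ≤
      (1 / M + 1 / (K - M) + 1 / τ) * (1 + x) ^ (-M) := by
  have hKM : 0 < K - M := by linarith
  have hx₀ : 0 < 1 + x := by linarith
  set a := (1 + x)⁻¹
  have ha : 0 < a := by positivity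
  have ha₁ : a ≤ 1 := inv_le_one_of_one_le₀ (by linarith)
  have ha_rpow : ∀ p : ℝ, a ^ p = (1 + x) ^ (-p) := fun p => by
    rw [Real.inv_rpow hx₀.le, Real.rpow_neg hx₀.le]
  have htail : ∀ {q c : ℝ}, q < -1 → 0 < c →
      IntegrableOn (fun s => (1 + x) ^ (-K) * s ^ q) (Ioi c) := fun hq hc =>
    (integrableOn_Ioi_rpow_of_lt hq hc).const_mul _
  have hmiddle : ∫ s in Ioc a 1, (1 + x) ^ (-K) * s ^ (M - K - 1) ≤ (1 + x) ^ (-M) / (K - M) := by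
    rw [show M - K - 1 = -(K - M) - 1 by ring]
    calc ∫ s in Ioc a 1, (1 + x) ^ (-K) * s ^ (-(K - M) - 1)
        ≤ ∫ s in Ioi a, (1 + x) ^ (-K) * s ^ (-(K - M) - 1) :=
          setIntegral_mono_set (htail (by linarith) ha)
            (ae_restrict_of_forall_mem measurableSet_Ioi fun s (hs : a < s) =>
              by have := ha.trans hs; positivity)
            Ioc_subset_Ioi_self.eventuallyLE
      _ = (1 + x) ^ (-M) / (K - M) := by
        rw [integral_const_mul, integral_Ioi_rpow_neg_sub_one hKM ha, ha_rpow, neg_neg,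
          mul_div_assoc', ← Real.rpow_add hx₀]
        ring_nf
  have hpieces : Ioc 0 a ∪ Ioc a 1 ∪ Ioi 1 = Ioi (0 : ℝ) := by
    rw [Ioc_union_Ioc_eq_Ioc ha.le ha₁, Ioc_union_Ioi_eq_Ioi zero_le_one]
  rw [← hpieces]
  calc ∫ s in Ioc 0 a ∪ Ioc a 1 ∪ Ioi 1, radialIntegrand M τ K x t r s
      ≤ (∫ s in Ioc 0 a, s ^ (M - 1)) + (∫ s in Ioc a 1, (1 + x) ^ (-K) * s ^ (M - K - 1))
          + ∫ s in Ioi 1, (1 + x) ^ (-K) * s ^ (-τ - 1) :=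
        setIntegral_union_union_le_of_le measurableSet_Ioc measurableSet_Ioc measurableSet_Ioi
          (fun s hs => radialIntegrand_nonneg hx (hr.le.trans hrt) hr.le (hpieces.subset hs))
          (fun s hs => radialIntegrand_le_rpow_sub_one (by linarith) hx (hr.le.trans hrt) hr.le hs.1)
          (fun s hs => radialIntegrand_le_of_le_one (by linarith) hx (hr.le.trans hrt) hr.le
            (ha.trans hs.1) hs.2)
          (fun s hs => radialIntegrand_le_of_one_le hτ.le (by linarith) hx hr hrt (mem_Ioi.mp hs).le)
          (integrableOn_Ioc_zero_rpow_sub_one hM ha.le)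
          ((htail (by linarith) ha).mono_set Ioc_subset_Ioi_self) (htail (by linarith) one_pos)
    _ ≤ (1 + x) ^ (-M) / M + (1 + x) ^ (-M) / (K - M) + (1 + x) ^ (-M) / τ := by
        refine add_le_add (add_le_add (le_of_eq ?_) hmiddle) ?_
        · rw [integral_Ioc_zero_rpow_sub_one hM ha.le, ha_rpow]
        · rw [integral_const_mul, integral_Ioi_rpow_neg_sub_one hτ one_pos, Real.one_rpow,
            mul_one_div]
          gcongr
          linarith
    _ = (1 / M + 1 / (K - M) + 1 / τ) * (1 + x) ^ (-M) := by ring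

end radialIntegrand

/-- For `M > 0`, `τ > 0` and `K > M` there is `C > 0` such that for all
`x ≥ 0` and `t ≥ r > 0`:
`∫₀^∞ min(s^M, 1) min(1, (ts/r)^{-τ}) (1 + xs)^{-K} ds/s ≤ C (1+x)^{-M}`. -/
theorem stmt9 (M τ K : ℝ) (hM : 0 < M) (hτ : 0 < τ) (hK : M < K) :
    ∃ C : ℝ, 0 < C ∧ ∀ x : ℝ, 0 ≤ x → ∀ t r : ℝ, 0 < r → r ≤ t →
      (∫ s in Set.Ioi (0 : ℝ),
          min (s ^ M) 1 * min 1 ((t * s / r) ^ (-τ)) * (1 + x * s) ^ (-K) / s) ≤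
        C * (1 + x) ^ (-M) := by
  have hKM : 0 < K - M := by linarith
  exact ⟨1 / M + 1 / (K - M) + 1 / τ, by positivity, fun x hx t r hr hrt =>
    integral_radialIntegrand_le hM hτ hK hx hr hrt⟩
end
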